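/- Let λ > 0 and let x : Ω → ℝ^N, y : Ω → ℝ^q be square-integrable random vectors. With W_out := (Γ + λI_N)⁻¹ C and a_out := μ_y − W_outᵀ μ_x, the characteristic error satisfies MSE(W_out, a_out) = trace( Σ_y − Cᵀ (Γ + λ I_N)⁻¹ (Γ + 2λ I_N) (Γ + λ I_N)⁻¹ C ). -/

import Mathlib

open Matrix MeasureTheory

/-! With `u := x - μx` and `v := y - μy`, the residual of the affine readout `(W, μy - Wᵀ μx)` is
`Wᵀ u - v`, so by bilinearity of the moment matrix `(u, v) ↦ E[u vᵀ]` its mean square is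
`tr (Wᵀ Γ W) - 2 tr (Wᵀ C) + tr Σ_y`. The matrix `A := Γ + λ I` is invertible because `Γ` is
positive semidefinite, and for `W = A⁻¹ C` the identity `Γ + 2λ I = 2A - Γ` turns
`Cᵀ A⁻¹ (Γ + 2λ I) A⁻¹ C` into `2 Wᵀ C - Wᵀ Γ W`. -/

section CrossMoment

variable {Ω : Type*} [MeasurableSpace Ω] (μ : Measure Ω) {m n p : Type*} [Fintype m] [Fintype n]

noncomputable def crossMoment (u : Ω → m → ℝ) (v : Ω → n → ℝ) : Matrix m n ℝ :=
  Matrix.of fun i k => ∫ ω, u ω i * v ω k ∂μ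

variable {μ} {u u' : Ω → m → ℝ} {v v' : Ω → n → ℝ}

lemma integrable_eval_mul_eval (hu : MemLp u 2 μ) (hv : MemLp v 2 μ) (i : m) (k : n) :
    Integrable (fun ω => u ω i * v ω k) μ :=
  (hu.eval i).integrable_mul (hv.eval k)

lemma MeasureTheory.MemLp.mulVec [Fintype p] (A : Matrix p m ℝ) (hu : MemLp u 2 μ) :
    MemLp (fun ω => A *ᵥ u ω) 2 μ :=
  (LinearMap.toContinuousLinearMap (mulVecLin A)).comp_memLp' hu

omit [Fintype m] [Fintype n] in
lemma crossMoment_transpose (u : Ω → m → ℝ) (v : Ω → n → ℝ) :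
    (crossMoment μ u v)ᵀ = crossMoment μ v u := by
  ext i k
  simp only [crossMoment, transpose_apply, of_apply, mul_comm]

lemma crossMoment_sub_left (hu : MemLp u 2 μ) (hu' : MemLp u' 2 μ) (hv : MemLp v 2 μ) :
    crossMoment μ (fun ω => u ω - u' ω) v = crossMoment μ u v - crossMoment μ u' v := by
  ext i k
  simp only [crossMoment, of_apply, Matrix.sub_apply, Pi.sub_apply, sub_mul]
  exact integral_sub (integrable_eval_mul_eval hu hv i k) (integrable_eval_mul_eval hu' hv i k)

lemma crossMoment_sub_right (hu : MemLp u 2 μ) (hv : MemLp v 2 μ) (hv' : MemLp v' 2 μ) :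
    crossMoment μ u (fun ω => v ω - v' ω) = crossMoment μ u v - crossMoment μ u v' := by
  rw [← transpose_transpose (crossMoment μ u _), crossMoment_transpose,
    crossMoment_sub_left hv hv' hu, transpose_sub, crossMoment_transpose, crossMoment_transpose]

lemma crossMoment_mulVec_left (A : Matrix p m ℝ) (hu : MemLp u 2 μ) (hv : MemLp v 2 μ) :
    crossMoment μ (fun ω => A *ᵥ u ω) v = A * crossMoment μ u v := by
  ext i k
  simp only [crossMoment, of_apply, mul_apply, mulVec, dotProduct, Finset.sum_mul, mul_assoc]
  rw [integral_finsetSum _ fun j _ => (integrable_eval_mul_eval hu hv j k).const_mul (A i j)]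
  exact Finset.sum_congr rfl fun j _ => integral_const_mul _ _

lemma crossMoment_mulVec_right (B : Matrix p n ℝ) (hu : MemLp u 2 μ) (hv : MemLp v 2 μ) :
    crossMoment μ u (fun ω => B *ᵥ v ω) = crossMoment μ u v * Bᵀ := by
  rw [← transpose_transpose (crossMoment μ u _), crossMoment_transpose,
    crossMoment_mulVec_left B hv hu, transpose_mul, crossMoment_transpose]

lemma trace_crossMoment (hu : MemLp u 2 μ) (hu' : MemLp u' 2 μ) :
    trace (crossMoment μ u u') = ∫ ω, u ω ⬝ᵥ u' ω ∂μ := by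
  simp only [dotProduct]
  rw [integral_finsetSum _ fun i _ => integrable_eval_mul_eval hu hu' i i]
  rfl

lemma posSemidef_crossMoment_self (hu : MemLp u 2 μ) : (crossMoment μ u u).PosSemidef := by
  refine .of_dotProduct_mulVec_nonneg ?_ fun x => ?_
  · rw [IsHermitian, conjTranspose_eq_transpose_of_trivial, crossMoment_transpose]
  · set w := fun ω => replicateRow Unit x *ᵥ u ω
    have hw : MemLp w 2 μ := hu.mulVec _
    have hquad : star x ⬝ᵥ crossMoment μ u u *ᵥ x = trace (crossMoment μ w w) := by
      rw [crossMoment_mulVec_left _ hu hw, crossMoment_mulVec_right _ hu hu]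
      simp [trace, mul_apply, dotProduct, mulVec, Finset.mul_sum]
    rw [hquad, trace_crossMoment hw hw]
    exact integral_nonneg fun ω => Finset.sum_nonneg fun i _ => mul_self_nonneg _

lemma integral_sum_sq_mulVec_sub (W : Matrix m n ℝ) (hu : MemLp u 2 μ) (hv : MemLp v 2 μ) :
    ∫ ω, ∑ k, ((Wᵀ *ᵥ u ω) k - v ω k) ^ 2 ∂μ =
      trace (Wᵀ * crossMoment μ u u * W) - 2 * trace (Wᵀ * crossMoment μ u v)
        + trace (crossMoment μ v v) := by
  have hw : MemLp (fun ω => Wᵀ *ᵥ u ω) 2 μ := hu.mulVec _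
  have hres : MemLp (fun ω => Wᵀ *ᵥ u ω - v ω) 2 μ := hw.sub hv
  have hcross :
      trace (crossMoment μ v (fun ω => Wᵀ *ᵥ u ω)) = trace (Wᵀ * crossMoment μ u v) := by
    rw [← trace_transpose, crossMoment_transpose, crossMoment_mulVec_left _ hu hv]
  calc ∫ ω, ∑ k, ((Wᵀ *ᵥ u ω) k - v ω k) ^ 2 ∂μ
      = trace (crossMoment μ (fun ω => Wᵀ *ᵥ u ω - v ω) (fun ω => Wᵀ *ᵥ u ω - v ω)) := by
        simp only [trace_crossMoment hres hres, dotProduct, Pi.sub_apply, sq]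
    _ = _ := by
        rw [crossMoment_sub_left hw hv hres, crossMoment_sub_right hw hw hv,
          crossMoment_sub_right hv hw hv, trace_sub, trace_sub, trace_sub, hcross,
          crossMoment_mulVec_left _ hu hw, crossMoment_mulVec_right _ hu hu,
          crossMoment_mulVec_left _ hu hv, transpose_transpose, Matrix.mul_assoc]
        ring

end CrossMoment

lemma ridge_identity {R m n : Type*} [CommRing R] [Fintype m] [DecidableEq m]
    {Γ : Matrix m m R} (hΓ : Γᵀ = Γ) (C : Matrix m n R) (c : R) (hA : IsUnit (Γ + c • 1)) :
    Cᵀ * (Γ + c • 1)⁻¹ * (Γ + (2 * c) • 1) * (Γ + c • 1)⁻¹ * C =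
      2 • (((Γ + c • 1)⁻¹ * C)ᵀ * C) - ((Γ + c • 1)⁻¹ * C)ᵀ * Γ * ((Γ + c • 1)⁻¹ * C) := by
  set A := Γ + c • (1 : Matrix m m R) with hAdef
  have hAsymm : Aᵀ = A := by rw [hAdef, transpose_add, transpose_smul, transpose_one, hΓ]
  have h2A : Γ + (2 * c) • (1 : Matrix m m R) = 2 • A - Γ := by
    rw [hAdef, two_mul, add_smul]
    module
  have hinv : A⁻¹ * A = 1 := A.nonsing_inv_mul ((isUnit_iff_isUnit_det A).mp hA)
  have hcancel : A⁻¹ * (A * (A⁻¹ * C)) = A⁻¹ * C := by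
    rw [← Matrix.mul_assoc, hinv, Matrix.one_mul]
  rw [transpose_mul, transpose_nonsing_inv, hAsymm, h2A]
  simp only [Matrix.mul_sub, Matrix.sub_mul, Matrix.mul_smul, Matrix.smul_mul, Matrix.mul_assoc,
    hcancel]

theorem stmt_3_general {Ω : Type*} [MeasureSpace Ω] [IsProbabilityMeasure (volume : Measure Ω)]
    {N q : ℕ} (lam : ℝ) (hlam : 0 < lam)
    (x : Ω → Fin N → ℝ) (y : Ω → Fin q → ℝ)
    (hx : MemLp x 2 volume) (hy : MemLp y 2 volume)
    (μx : Fin N → ℝ)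
    (μy : Fin q → ℝ)
    (Γ : Matrix (Fin N) (Fin N) ℝ)
    (hΓ : Γ = Matrix.of fun i j => ∫ ω, (x ω i - μx i) * (x ω j - μx j))
    (C : Matrix (Fin N) (Fin q) ℝ)
    (hC : C = Matrix.of fun i k => ∫ ω, (x ω i - μx i) * (y ω k - μy k))
    (Sy : Matrix (Fin q) (Fin q) ℝ)
    (hSy : Sy = Matrix.of fun k l => ∫ ω, (y ω k - μy k) * (y ω l - μy l))
    (MSE : Matrix (Fin N) (Fin q) ℝ → (Fin q → ℝ) → ℝ)
    (hMSE : MSE = fun W a => ∫ ω, ∑ k, (Wᵀ.mulVec (x ω) k + a k - y ω k) ^ 2)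
    (Wout : Matrix (Fin N) (Fin q) ℝ)
    (hWout : Wout = (Γ + lam • (1 : Matrix (Fin N) (Fin N) ℝ))⁻¹ * C)
    (aout : Fin q → ℝ) (haout : aout = μy - Woutᵀ.mulVec μx) :
    MSE Wout aout =
      Matrix.trace (Sy -
        Cᵀ * (Γ + lam • (1 : Matrix (Fin N) (Fin N) ℝ))⁻¹
          * (Γ + (2 * lam) • (1 : Matrix (Fin N) (Fin N) ℝ))
          * (Γ + lam • (1 : Matrix (Fin N) (Fin N) ℝ))⁻¹ * C) := by
  set u := fun ω => x ω - μx
  set v := fun ω => y ω - μy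
  have hu : MemLp u 2 volume := hx.sub (memLp_const μx)
  have hv : MemLp v 2 volume := hy.sub (memLp_const μy)
  replace hΓ : Γ = crossMoment volume u u := hΓ
  replace hC : C = crossMoment volume u v := hC
  replace hSy : Sy = crossMoment volume v v := hSy
  have hΓsymm : Γᵀ = Γ := by rw [hΓ, crossMoment_transpose]
  have hΓpsd : Γ.PosSemidef := hΓ ▸ posSemidef_crossMoment_self hu
  have hA : IsUnit (Γ + lam • 1) := (PosDef.posSemidef_add hΓpsd (PosDef.one.smul hlam)).isUnit
  have hresidual : ∀ ω k, (Woutᵀ *ᵥ x ω) k + aout k - y ω k = (Woutᵀ *ᵥ u ω) k - v ω k := by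
    intro ω k
    simp only [haout, u, v, mulVec_sub, Pi.sub_apply]
    ring
  simp only [hMSE, hresidual]
  rw [integral_sum_sq_mulVec_sub Wout hu hv, ← hΓ, ← hC, ← hSy, ridge_identity hΓsymm C lam hA,
    ← hWout, trace_sub, trace_sub, trace_smul, nsmul_eq_mul]
  ring

/-- the characteristic error of the optimal readout satisfies
`MSE(W_out, a_out) = trace(Σ_y − Cᵀ (Γ+λI)⁻¹ (Γ+2λI) (Γ+λI)⁻¹ C)`. -/
theorem stmt_3 {Ω : Type*} [MeasureSpace Ω] [IsProbabilityMeasure (volume : Measure Ω)]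
    {N q : ℕ} (lam : ℝ) (hlam : 0 < lam)
    (x : Ω → Fin N → ℝ) (y : Ω → Fin q → ℝ)
    (hx : MemLp x 2 volume) (hy : MemLp y 2 volume)
    (μx : Fin N → ℝ) (hμx : μx = fun i => ∫ ω, x ω i)
    (μy : Fin q → ℝ) (hμy : μy = fun k => ∫ ω, y ω k)
    (Γ : Matrix (Fin N) (Fin N) ℝ)
    (hΓ : Γ = Matrix.of fun i j => ∫ ω, (x ω i - μx i) * (x ω j - μx j))
    (C : Matrix (Fin N) (Fin q) ℝ)
    (hC : C = Matrix.of fun i k => ∫ ω, (x ω i - μx i) * (y ω k - μy k))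
    (Sy : Matrix (Fin q) (Fin q) ℝ)
    (hSy : Sy = Matrix.of fun k l => ∫ ω, (y ω k - μy k) * (y ω l - μy l))
    (MSE : Matrix (Fin N) (Fin q) ℝ → (Fin q → ℝ) → ℝ)
    (hMSE : MSE = fun W a => ∫ ω, ∑ k, (Wᵀ.mulVec (x ω) k + a k - y ω k) ^ 2)
    (Wout : Matrix (Fin N) (Fin q) ℝ)
    (hWout : Wout = (Γ + lam • (1 : Matrix (Fin N) (Fin N) ℝ))⁻¹ * C)
    (aout : Fin q → ℝ) (haout : aout = μy - Woutᵀ.mulVec μx) :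
    MSE Wout aout =
      Matrix.trace (Sy -
        Cᵀ * (Γ + lam • (1 : Matrix (Fin N) (Fin N) ℝ))⁻¹
          * (Γ + (2 * lam) • (1 : Matrix (Fin N) (Fin N) ℝ))
          * (Γ + lam • (1 : Matrix (Fin N) (Fin N) ℝ))⁻¹ * C) :=
  stmt_3_general lam hlam x y hx hy μx μy Γ hΓ C hC Sy hSy MSE hMSE Wout hWout aout haout
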